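/- Let P ∈ ℝ^{n×n} be symmetric positive definite, τ ∈ [0,1), λ > (1−τ)‖P‖, and P = L_P L_Pᵀ. Writing L_PᵀL_P = U D Uᵀ with U orthogonal and D = diag(d₁,…,dₙ), the matrix P̃ = L_P(I − ((1−τ)/λ)L_PᵀL_P)^{1/(τ−1)}L_Pᵀ satisfies tr(P̃ − P) = Σᵢ dᵢ((1 − ((1−τ)/λ)dᵢ)^{1/(τ−1)} − 1) > 0. -/

import Mathlib

open Matrix

noncomputable def matFun {n : ℕ} (A : Matrix (Fin n) (Fin n) ℝ) (f : ℝ → ℝ) :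
    Matrix (Fin n) (Fin n) ℝ :=
  if h : A.IsHermitian then
    (h.eigenvectorUnitary : Matrix (Fin n) (Fin n) ℝ) *
      Matrix.diagonal (fun i => f (h.eigenvalues i)) *
      star (h.eigenvectorUnitary : Matrix (Fin n) (Fin n) ℝ)
  else 0

theorem Matrix.isHermitian_transpose_mul_self {m n α : Type*} [Fintype m] [CommSemiring α]
    [StarRing α] [TrivialStar α] (A : Matrix m n α) : (Aᵀ * A).IsHermitian := by
  simpa [Matrix.conjTranspose_eq_transpose_of_trivial] using
    Matrix.isHermitian_conjTranspose_mul_self A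

noncomputable def specNorm {n : ℕ} (A : Matrix (Fin n) (Fin n) ℝ) : ℝ :=
  if h : A.IsHermitian then ⨆ i, h.eigenvalues i else 0

/-!
Write `d` for the eigenvalues of `LᵀL`. By cyclicity of the trace,
`tr (L g(LᵀL) Lᵀ) = tr (LᵀL g(LᵀL)) = ∑ᵢ dᵢ g(dᵢ)` for every function `g`, which gives the formula.
For the sign: `LᵀL` is positive definite, and its eigenvalues `dᵢ > 0` are nonzero eigenvalues of
`LLᵀ = P`, hence at most `‖P‖`. So `0 < 1 - ((1-τ)/λ) dᵢ < 1`, and raising it to the negative power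
`1/(τ-1)` gives a number `> 1`.
-/

namespace Matrix

variable {ι : Type*} [Fintype ι] [DecidableEq ι]

lemma IsHermitian.trace_cfc {𝕜 : Type*} [RCLike 𝕜] {A : Matrix ι ι 𝕜} (hA : A.IsHermitian)
    (f : ℝ → ℝ) : (cfc f A).trace = ∑ i, (f (hA.eigenvalues i) : 𝕜) := by
  rw [hA.cfc_eq, IsHermitian.cfc, Unitary.conjStarAlgAut_apply, trace_mul_cycle,
    Unitary.coe_star_mul_self, one_mul, trace_diagonal]
  rfl

lemma IsHermitian.trace_mul_cfc {𝕜 : Type*} [RCLike 𝕜] {A : Matrix ι ι 𝕜} (hA : A.IsHermitian)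
    (f : ℝ → ℝ) : (A * cfc f A).trace = ∑ i, (hA.eigenvalues i * f (hA.eigenvalues i) : 𝕜) := by
  have hsa : IsSelfAdjoint A := hA
  nth_rw 1 [← cfc_id' ℝ A]
  rw [← cfc_mul _ _ A (by fun_prop) (A.finite_real_spectrum.continuousOn f), hA.trace_cfc]
  simp

lemma cfc_one_sub_smul {A : Matrix ι ι ℝ} (hA : A.IsHermitian) (c : ℝ) (f : ℝ → ℝ) :
    cfc f (1 - c • A) = cfc (fun x => f (1 - c * x)) A := by
  have hsa : IsSelfAdjoint A := hA
  have hlin : cfc (fun x => 1 - c * x) A = 1 - c • A := by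
    rw [cfc_sub _ _ A, cfc_const_one ℝ A, cfc_const_mul_id c A]
  rw [cfc_comp' f _ A ((A.finite_real_spectrum.image _).continuousOn f), hlin]

lemma PosDef.conjTranspose_mul_self_of_mul_conjTranspose {K : Type*} [Field K] [PartialOrder K]
    [StarRing K] [StarOrderedRing K] {L : Matrix ι ι K} (h : (L * Lᴴ).PosDef) :
    (Lᴴ * L).PosDef :=
  PosDef.conjTranspose_mul_self L
    (mulVec_injective_iff_isUnit.2 (isUnit_of_mul_isUnit_left h.isUnit))

lemma eigenvalues_transpose_mul_self_pos {L : Matrix ι ι ℝ} (h : (L * Lᵀ).PosDef) (i : ι) :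
    0 < (isHermitian_transpose_mul_self L).eigenvalues i := by
  have hPD := PosDef.conjTranspose_mul_self_of_mul_conjTranspose (L := L)
    (by rwa [conjTranspose_eq_transpose_of_trivial])
  rw [conjTranspose_eq_transpose_of_trivial] at hPD
  exact hPD.eigenvalues_pos i

lemma eigenvalues_transpose_mul_self_mem_spectrum (L : Matrix ι ι ℝ) {i : ι}
    (hi : (isHermitian_transpose_mul_self L).eigenvalues i ≠ 0) :
    (isHermitian_transpose_mul_self L).eigenvalues i ∈ spectrum ℝ (L * Lᵀ) :=
  ((spectrum.nonzero_mul_comm _ _).subset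
    ⟨(isHermitian_transpose_mul_self L).eigenvalues_mem_spectrum_real i, hi⟩).1

lemma trace_mul_cfc_mul_transpose (L : Matrix ι ι ℝ) (f : ℝ → ℝ) :
    (L * cfc f (Lᵀ * L) * Lᵀ).trace =
      ∑ i, (isHermitian_transpose_mul_self L).eigenvalues i *
        f ((isHermitian_transpose_mul_self L).eigenvalues i) := by
  rw [trace_mul_cycle, (isHermitian_transpose_mul_self L).trace_mul_cfc]
  rfl

lemma trace_mul_transpose_eq_sum_eigenvalues (L : Matrix ι ι ℝ) :
    (L * Lᵀ).trace = ∑ i, (isHermitian_transpose_mul_self L).eigenvalues i := by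
  rw [trace_mul_comm, (isHermitian_transpose_mul_self L).trace_eq_sum_eigenvalues]
  rfl

end Matrix

lemma matFun_eq_cfc {n : ℕ} {A : Matrix (Fin n) (Fin n) ℝ} (hA : A.IsHermitian) (f : ℝ → ℝ) :
    matFun A f = cfc f A := by
  rw [matFun, dif_pos hA, hA.cfc_eq, IsHermitian.cfc, Unitary.conjStarAlgAut_apply]
  rfl

lemma le_specNorm_of_mem_spectrum {n : ℕ} {A : Matrix (Fin n) (Fin n) ℝ} (hA : A.IsHermitian)
    {x : ℝ} (hx : x ∈ spectrum ℝ A) : x ≤ specNorm A := by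
  rw [hA.spectrum_real_eq_range_eigenvalues] at hx
  obtain ⟨i, rfl⟩ := hx
  rw [specNorm, dif_pos hA]
  exact le_ciSup (Set.finite_range _).bddAbove i

lemma trace_mul_matFun_one_sub_smul_mul_transpose_sub {n : ℕ} (L : Matrix (Fin n) (Fin n) ℝ)
    (c : ℝ) (f : ℝ → ℝ) :
    (L * matFun (1 - c • (Lᵀ * L)) f * Lᵀ - L * Lᵀ).trace =
      ∑ i, (isHermitian_transpose_mul_self L).eigenvalues i *
        (f (1 - c * (isHermitian_transpose_mul_self L).eigenvalues i) - 1) := by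
  have hM := isHermitian_transpose_mul_self L
  rw [matFun_eq_cfc (isHermitian_one.sub (hM.smul (IsSelfAdjoint.all c))), cfc_one_sub_smul hM,
    trace_sub, trace_mul_cfc_mul_transpose, trace_mul_transpose_eq_sum_eigenvalues,
    ← Finset.sum_sub_distrib]
  simp only [mul_sub, mul_one]

theorem additional_mse_formula_general {n : ℕ} (hn : 0 < n) (P L : Matrix (Fin n) (Fin n) ℝ)
    (hfac : P = L * Lᵀ) (hP : P.PosDef) (τ lam : ℝ)
    (hτ1 : τ < 1) (hlam : (1 - τ) * specNorm P < lam) :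
    (L * matFun ((1 : Matrix (Fin n) (Fin n) ℝ) - ((1 - τ) / lam) • (Lᵀ * L))
        (fun x => x ^ (1 / (τ - 1))) * Lᵀ - P).trace =
      ∑ i : Fin n, (Matrix.isHermitian_transpose_mul_self L).eigenvalues i *
        ((1 - ((1 - τ) / lam) * (Matrix.isHermitian_transpose_mul_self L).eigenvalues i) ^
          (1 / (τ - 1)) - 1) ∧
    0 < (L * matFun ((1 : Matrix (Fin n) (Fin n) ℝ) - ((1 - τ) / lam) • (Lᵀ * L))
        (fun x => x ^ (1 / (τ - 1))) * Lᵀ - P).trace := by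
  subst hfac
  have hformula := trace_mul_matFun_one_sub_smul_mul_transpose_sub L ((1 - τ) / lam)
    (fun x => x ^ (1 / (τ - 1)))
  refine ⟨hformula, hformula ▸ Finset.sum_pos (fun i _ => ?_) ⟨⟨0, hn⟩, Finset.mem_univ _⟩⟩
  set d := (isHermitian_transpose_mul_self L).eigenvalues
  have hd_pos : 0 < d i := eigenvalues_transpose_mul_self_pos hP i
  have hd_le : d i ≤ specNorm (L * Lᵀ) :=
    le_specNorm_of_mem_spectrum hP.isHermitian
      (eigenvalues_transpose_mul_self_mem_spectrum L hd_pos.ne')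
  have hlam_pos : 0 < lam := by nlinarith
  have hcd_lt : (1 - τ) / lam * d i < 1 := by
    rw [div_mul_eq_mul_div, div_lt_one hlam_pos]
    nlinarith
  have hcd_pos : 0 < (1 - τ) / lam * d i := mul_pos (div_pos (by linarith) hlam_pos) hd_pos
  exact mul_pos hd_pos (sub_pos.2 (Real.one_lt_rpow_of_pos_of_lt_one_of_neg (by linarith)
    (by linarith) (one_div_neg.2 (by linarith))))

/-- Additional mean square error: with `P = L_P L_Pᵀ` positive definite,
`τ ∈ [0,1)`, `λ > (1−τ)‖P‖`, and `dᵢ` the eigenvalues of `L_Pᵀ L_P`, the least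
favorable error covariance `P̃ = L_P (I − ((1−τ)/λ) L_Pᵀ L_P)^{1/(τ−1)} L_Pᵀ`
satisfies `tr(P̃ − P) = ∑ᵢ dᵢ((1 − ((1−τ)/λ)dᵢ)^{1/(τ−1)} − 1) > 0`. -/
theorem additional_mse_formula {n : ℕ} (hn : 0 < n) (P L : Matrix (Fin n) (Fin n) ℝ)
    (hfac : P = L * Lᵀ) (hP : P.PosDef) (τ lam : ℝ)
    (hτ0 : 0 ≤ τ) (hτ1 : τ < 1) (hlam : (1 - τ) * specNorm P < lam) :
    (L * matFun ((1 : Matrix (Fin n) (Fin n) ℝ) - ((1 - τ) / lam) • (Lᵀ * L))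
        (fun x => x ^ (1 / (τ - 1))) * Lᵀ - P).trace =
      ∑ i : Fin n, (Matrix.isHermitian_transpose_mul_self L).eigenvalues i *
        ((1 - ((1 - τ) / lam) * (Matrix.isHermitian_transpose_mul_self L).eigenvalues i) ^
          (1 / (τ - 1)) - 1) ∧
    0 < (L * matFun ((1 : Matrix (Fin n) (Fin n) ℝ) - ((1 - τ) / lam) • (Lᵀ * L))
        (fun x => x ^ (1 / (τ - 1))) * Lᵀ - P).trace :=
  additional_mse_formula_general hn P L hfac hP τ lam hτ1 hlam
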